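/- The set of clauses { ⊢ α ≤ α ; ⊢ α ≤ g(α) ; i = f(α), i = f(g(α)) ⊢ (for each i ≤ n) ; f(α) < 0 ⊢ ; 0 ≤ α ⊢ f(α) < n, f(α) = n ; f(α) < i+1, α ≤ β ⊢ f(β) < i, i = f(β) (for each i) } is unsatisfiable over ℕ, i.e., there exist no f, g : ℕ → ℕ making all clauses true. -/

import Mathlib

/-!
The clauses force `f (g α) < f α` for every `α`: the last clause with `i = f α` and `β = g α`
gives `f (g α) ≤ f α`, and since `f α ≤ n`, the clause for `i = f α` forbids equality.
So `f` strictly decreases along `g`, which is impossible at a point where `f` is minimal.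
-/

theorem exists_not_lt_comp {α β : Type*} [Nonempty α] [LT β] [WellFoundedLT β]
    (f : α → β) (g : α → α) : ∃ a, ¬ f (g a) < f a := by
  obtain ⟨_, ⟨a, rfl⟩, hmin⟩ :=
    wellFounded_lt.has_min (Set.range f) (Set.range_nonempty f)
  exact ⟨a, hmin _ (Set.mem_range_self (g a))⟩

theorem eca_clause_set_unsat (n : ℕ) :
    ¬ ∃ f g : ℕ → ℕ,
      (∀ α : ℕ, α ≤ α) ∧
      (∀ α : ℕ, α ≤ g α) ∧
      (∀ i ≤ n, ∀ α, i = f α → i = f (g α) → False) ∧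
      (∀ α, f α < 0 → False) ∧
      (∀ α : ℕ, 0 ≤ α → f α < n ∨ f α = n) ∧
      (∀ i α β, f α < i + 1 → α ≤ β → f β < i ∨ i = f β) := by
  rintro ⟨f, g, -, hg, hne, -, hbound, hmono⟩
  obtain ⟨α, hα⟩ := exists_not_lt_comp f g
  have hle : f (g α) ≤ f α :=
    (hmono (f α) α (g α) (Nat.lt_succ_self _) (hg α)).elim le_of_lt ge_of_eq
  have hfn : f α ≤ n := (hbound α (Nat.zero_le α)).elim le_of_lt le_of_eq
  exact hα (hle.lt_of_ne fun h ↦ hne (f α) hfn α rfl h.symm)
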